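/- Let a group G act on sets S and T, let B ⊆ T be a base space with projection P_B and choice of elements g_t ∈ G satisfying g_t · P_B(t) = t. Given an arbitrary map F_B : ℝ^S → ℝ^B, the map F : ℝ^S → ℝ^T defined by F[x](t) := F_B[g_t⁻¹·x](P_B(t)) is G-equivariant and its generator R_B ∘ F equals F_B. -/
import Mathlib


/-- Given an arbitrary map `F_B : ℝ^S → ℝ^B`, the map
`F[x](t) := F_B[g_t⁻¹·x](P_B t)` is `G`-equivariant and its generator
`R_B ∘ F` equals `F_B`. -/
theorem generator_induces_equivariant_map
    {G S T : Type*} [Group G] [MulAction G S] [MulAction G T]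
    (B : Set T)
    (PB : T → T) (hPB_mem : ∀ t, PB t ∈ B)
    (hPB_base : ∀ t ∈ B, PB t = t)
    (hPB_inv : ∀ (g : G) (t : T), PB (g⁻¹ • t) = PB t)
    (gt : T → G) (hgt : ∀ t, gt t • PB t = t)
    (hgt_base : ∀ t ∈ B, gt t = 1)
    (hgt_compat : ∀ (g : G) (t : T), gt (g⁻¹ • t) = g⁻¹ * gt t)
    (FB : (S → ℝ) → (↥B → ℝ))
    (F : (S → ℝ) → (T → ℝ))
    (hFdef : ∀ (x : S → ℝ) (t : T),
      F x t = FB (fun s => x ((gt t)⁻¹⁻¹ • s)) ⟨PB t, hPB_mem t⟩) :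
    (∀ (g : G) (x : S → ℝ),
      F (fun s => x (g⁻¹ • s)) = fun t => F x (g⁻¹ • t)) ∧
    (∀ (x : S → ℝ) (τ : ↥B), F x ↑τ = FB x τ) := by
  constructor
  · intro g x
    funext t
    rw [hFdef, hFdef]
    have h1 : (⟨PB t, hPB_mem t⟩ : ↥B) = ⟨PB (g⁻¹ • t), hPB_mem _⟩ :=
      Subtype.ext (hPB_inv g t).symm
    rw [h1]
    congr 1
    funext s
    rw [hgt_compat]
    simp [mul_smul]
  · intro x τ
    rw [hFdef]
    have h0 : gt (τ : T) = 1 := hgt_base _ τ.2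
    have h1 : (⟨PB (τ : T), hPB_mem _⟩ : ↥B) = τ := Subtype.ext (hPB_base _ τ.2)
    rw [h1]
    congr 1
    funext s
    rw [h0]
    simp
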